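/- arXiv:1901.05732 — 2 statements merged into one kernel-verified Lean document; each statement's English description precedes it below -/
import Mathlib

section
/- For every M ∈ [0, N/r], the optimal average load under uncoded cache placement over uniformly random demands satisfies R*_u(M) ≥ g(M), where g is the lower convex envelope of the K+1 memory-load points (N·t/(K·r), E_{d uniform on {1,...,N}^K}[c^{N_e(d)}_t]), t ∈ {0,...,K}. -/
open Finset

/-- The quantity `c^s_t` from the converse bound. -/
noncomputable def cst (N K r s t : ℕ) : ℝ :=
  (∑ j ∈ Finset.Icc 1 (min (N - r + 1) (min (K - t) s)),
    (((N - j).choose (r - 1) * (K - j).choose t : ℕ) : ℝ)) /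
  ((((N - 1).choose (r - 1) : ℕ) : ℝ) * ((K.choose t : ℕ) : ℝ))

/-- Lower convex envelope of a set of points over a domain `D`: the largest convex
function on `D` lying below all the points, evaluated at `x` (as a pointwise sup of
convex minorants). -/
noncomputable def lowerConvexEnvelope (D : Set ℝ) (pts : Set (ℝ × ℝ)) (x : ℝ) : ℝ :=
  sSup {y : ℝ | ∃ g : ℝ → ℝ, ConvexOn ℝ D g ∧ (∀ p ∈ pts, g p.1 ≤ p.2) ∧ y = g x}

/-- Index of a block: a subset of the `N` files of size `r`. -/
abbrev BlockIdx (N r : ℕ) := {S : Finset (Fin N) // S.card = r}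

/-- A bit position in the library: a block together with a bit index inside the block
(each block has `b` bits). -/
abbrev Pos (N r b : ℕ) := BlockIdx N r × Fin b

/-- A library realization: an assignment of bits to all positions. -/
abbrev Lib (N r b : ℕ) := Pos N r b → Bool

/-- The content of an uncoded cache: the library masked to the cached positions. -/
def maskedCache {N r b : ℕ} (c : Finset (Pos N r b)) (W : Lib N r b) : Lib N r b :=
  fun p => if p ∈ c then W p else false

/-- A shared-link caching scheme with correlated files and uncoded cache placement:
each block has `b` bits (so each file has `B = b * C(N-1,r-1)` bits), each of the `K`
users caches at most `M·B` library bits, and for each demand vector the server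
broadcasts `len d` bits from which every user recovers every block of its demanded
file using also its cache. -/
structure UncodedCachingScheme (N K r b : ℕ) (M : ℝ) where
  cache : Fin K → Finset (Pos N r b)
  cache_size : ∀ k, ((cache k).card : ℝ) ≤ M * ((b * Nat.choose (N - 1) (r - 1) : ℕ) : ℝ)
  len : (Fin K → Fin N) → ℕ
  enc : (dem : Fin K → Fin N) → Lib N r b → (Fin (len dem) → Bool)
  dec : (dem : Fin K → Fin N) → Fin K → Lib N r b → (Fin (len dem) → Bool) → Pos N r b → Bool
  correct : ∀ (dem : Fin K → Fin N) (W : Lib N r b) (k : Fin K) (p : Pos N r b),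
    dem k ∈ p.1.1 →
    dec dem k (maskedCache (cache k) W) (enc dem W) p = W p

/-- Demand vectors with exactly `s` distinct entries. -/
def demandsOfType (N K s : ℕ) : Finset (Fin K → Fin N) :=
  (Finset.univ : Finset (Fin K → Fin N)).filter
    (fun dem => (Finset.univ.image dem).card = s)

/-- `R*_u(M,s)`: optimal average load, under uncoded placement, over demands of type `s`. -/
noncomputable def RstarU_type (N K r : ℕ) (M : ℝ) (s : ℕ) : ℝ :=
  sInf { x : ℝ | ∃ b : ℕ, 0 < b ∧ ∃ sch : UncodedCachingScheme N K r b M,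
    x = (∑ dem ∈ demandsOfType N K s, ((sch.len dem : ℕ) : ℝ)) /
      (((demandsOfType N K s).card : ℝ) * ((b * Nat.choose (N - 1) (r - 1) : ℕ) : ℝ)) }

/-- Number of distinct entries `N_e(d)` of a demand vector. -/
def numDistinct {N K : ℕ} (dem : Fin K → Fin N) : ℕ := (Finset.univ.image dem).card

/-- `R*_u(M)`: optimal average load, under uncoded placement, over uniform demands. -/
noncomputable def RstarU_avg (N K r : ℕ) (M : ℝ) : ℝ :=
  sInf { x : ℝ | ∃ b : ℕ, 0 < b ∧ ∃ sch : UncodedCachingScheme N K r b M,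
    x = (∑ dem : Fin K → Fin N, ((sch.len dem : ℕ) : ℝ)) /
      (((N : ℝ) ^ K) * ((b * Nat.choose (N - 1) (r - 1) : ℕ) : ℝ)) }

/-- `E_{d uniform}[c^{N_e(d)}_t]`. -/
noncomputable def avgC (N K r t : ℕ) : ℝ :=
  (∑ dem : Fin K → Fin N, cst N K r (numDistinct dem) t) / ((N : ℝ) ^ K)



section Aux
variable {α : Type*} [Fintype α] [DecidableEq α]

lemma exists_perm_image_eq (A B : Finset α) (h : A.card = B.card) :
    ∃ π : Equiv.Perm α, A.image π = B := by
  have h' : Fintype.card {x // x ∈ A} = Fintype.card {x // x ∈ B} := by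
    simpa [Fintype.card_coe] using h
  let e : {x // x ∈ A} ≃ {x // x ∈ B} := Fintype.equivOfCardEq h'
  refine ⟨Equiv.extendSubtype e, ?_⟩
  have hsub : A.image (Equiv.extendSubtype e) ⊆ B := by
    intro y hy
    rcases Finset.mem_image.1 hy with ⟨x, hx, rfl⟩
    exact Equiv.extendSubtype_mem e x hx
  refine Finset.eq_of_subset_of_card_le hsub ?_
  rw [Finset.card_image_of_injective _ (Equiv.injective _), h]

/-- fibers of `u ↦ U.image u.symm` over sets of the right card all have the same card -/
lemma fiber_card_eq (U A B : Finset α) (hAB : A.card = B.card) :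
    ((univ : Finset (Equiv.Perm α)).filter (fun u => U.image u.symm = A)).card =
    ((univ : Finset (Equiv.Perm α)).filter (fun u => U.image u.symm = B)).card := by
  obtain ⟨π, hπ⟩ := exists_perm_image_eq A B hAB
  refine Finset.card_bij' (fun u _ => π.symm.trans u) (fun v _ => π.trans v) ?_ ?_ ?_ ?_
  · intro u hu
    simp only [mem_filter, mem_univ, true_and] at hu ⊢
    have : U.image (π.symm.trans u).symm = (U.image u.symm).image π := by
      rw [Finset.image_image]; rfl
    rw [this, hu, hπ]
  · intro v hv
    simp only [mem_filter, mem_univ, true_and] at hv ⊢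
    have : U.image (π.trans v).symm = (U.image v.symm).image π.symm := by
      rw [Finset.image_image]; rfl
    rw [this, hv, ← hπ, Finset.image_image]
    simp
  · intro u _; ext x; simp
  · intro v _; ext x; simp

lemma fiber_card_mul (U A : Finset α) (hA : A.card = U.card) :
    ((univ : Finset (Equiv.Perm α)).filter (fun u => U.image u.symm = A)).card *
      (Fintype.card α).choose U.card = Fintype.card (Equiv.Perm α) := by
  classical
  have hmaps : ∀ u : Equiv.Perm α, u ∈ (univ : Finset (Equiv.Perm α)) →
      U.image u.symm ∈ Finset.powersetCard U.card (univ : Finset α) := by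
    intro u _
    rw [Finset.mem_powersetCard]
    exact ⟨Finset.subset_univ _, Finset.card_image_of_injective _ (Equiv.injective _)⟩
  have htot := Finset.card_eq_sum_card_fiberwise hmaps
  have hconst : ∀ C ∈ Finset.powersetCard U.card (univ : Finset α),
      ((univ : Finset (Equiv.Perm α)).filter (fun u => U.image u.symm = C)).card =
      ((univ : Finset (Equiv.Perm α)).filter (fun u => U.image u.symm = A)).card := by
    intro C hC
    exact fiber_card_eq U C A (by rw [(Finset.mem_powersetCard.1 hC).2, hA])
  rw [Finset.card_univ] at htot
  rw [htot, Finset.sum_congr rfl hconst, Finset.sum_const, smul_eq_mul,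
    Finset.card_powersetCard, Finset.card_univ, mul_comm]

/-- The key permutation count: number of permutations avoiding `U` on `L`. -/
lemma perm_avoid_count (L U : Finset α) :
    ((univ : Finset (Equiv.Perm α)).filter (fun u => ∀ i ∈ L, u i ∉ U)).card *
      (Fintype.card α).choose U.card =
    (Fintype.card α - L.card).choose U.card * Fintype.card (Equiv.Perm α) := by
  classical
  -- rewrite the condition via the fiber map
  have hcond : ∀ u : Equiv.Perm α, (∀ i ∈ L, u i ∉ U) ↔ Disjoint L (U.image u.symm) := by
    intro u
    rw [Finset.disjoint_left]
    constructor
    · intro h i hiL hiI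
      rcases Finset.mem_image.1 hiI with ⟨y, hy, hyx⟩
      exact h i hiL (by rw [← hyx]; simpa using hy)
    · intro h i hiL hiU
      exact h hiL (Finset.mem_image.2 ⟨u i, hiU, by simp⟩)
  have hmaps : ∀ u : Equiv.Perm α,
      u ∈ (univ : Finset (Equiv.Perm α)).filter (fun u => ∀ i ∈ L, u i ∉ U) →
      U.image u.symm ∈ (Finset.powersetCard U.card (univ : Finset α)).filter
        (fun C => Disjoint L C) := by
    intro u hu
    rw [Finset.mem_filter] at hu ⊢
    refine ⟨Finset.mem_powersetCard.2 ⟨Finset.subset_univ _,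
      Finset.card_image_of_injective _ (Equiv.injective _)⟩, (hcond u).1 hu.2⟩
  have htot := Finset.card_eq_sum_card_fiberwise hmaps
  have hfib : ∀ C ∈ (Finset.powersetCard U.card (univ : Finset α)).filter
      (fun C => Disjoint L C),
      (((univ : Finset (Equiv.Perm α)).filter (fun u => ∀ i ∈ L, u i ∉ U)).filter
        (fun u => U.image u.symm = C)).card * (Fintype.card α).choose U.card
        = Fintype.card (Equiv.Perm α) := by
    intro C hC
    rw [Finset.mem_filter, Finset.mem_powersetCard] at hC
    have : ((univ : Finset (Equiv.Perm α)).filter (fun u => ∀ i ∈ L, u i ∉ U)).filter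
        (fun u => U.image u.symm = C) = (univ : Finset (Equiv.Perm α)).filter
        (fun u => U.image u.symm = C) := by
      ext u
      simp only [Finset.mem_filter, Finset.mem_univ, true_and]
      constructor
      · tauto
      · intro h; exact ⟨(hcond u).2 (h ▸ hC.2), h⟩
    rw [this]
    exact fiber_card_mul U C hC.1.2
  -- count of admissible C's
  have hCcount : ((Finset.powersetCard U.card (univ : Finset α)).filter
      (fun C => Disjoint L C)).card = (Fintype.card α - L.card).choose U.card := by
    have : (Finset.powersetCard U.card (univ : Finset α)).filter (fun C => Disjoint L C)
        = Finset.powersetCard U.card Lᶜ := by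
      ext C
      simp only [Finset.mem_filter, Finset.mem_powersetCard]
      constructor
      · rintro ⟨⟨-, hcard⟩, hdisj⟩
        refine ⟨fun a haC => Finset.mem_compl.2 fun haL => ?_, hcard⟩
        exact (Finset.disjoint_left.1 hdisj haL) haC
      · rintro ⟨hsub, hcard⟩
        refine ⟨⟨Finset.subset_univ _, hcard⟩, ?_⟩
        rw [Finset.disjoint_left]
        intro a haL haC
        exact (Finset.mem_compl.1 (hsub haC)) haL
    rw [this, Finset.card_powersetCard, Finset.card_compl]
  calc ((univ : Finset (Equiv.Perm α)).filter (fun u => ∀ i ∈ L, u i ∉ U)).card *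
      (Fintype.card α).choose U.card
      = ∑ C ∈ (Finset.powersetCard U.card (univ : Finset α)).filter (fun C => Disjoint L C),
          (((univ : Finset (Equiv.Perm α)).filter (fun u => ∀ i ∈ L, u i ∉ U)).filter
            (fun u => U.image u.symm = C)).card * (Fintype.card α).choose U.card := by
        rw [htot, Finset.sum_mul]
    _ = ∑ C ∈ (Finset.powersetCard U.card (univ : Finset α)).filter (fun C => Disjoint L C),
          Fintype.card (Equiv.Perm α) := Finset.sum_congr rfl hfib
    _ = (Fintype.card α - L.card).choose U.card * Fintype.card (Equiv.Perm α) := by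
        rw [Finset.sum_const, smul_eq_mul, hCcount]

end Aux


section Leaders
variable {N K : ℕ}

/-- occurrences of the value `f` in `e` -/
def occs (e : Fin K → Fin N) (f : Fin N) : Finset (Fin K) :=
  univ.filter (fun i => e i = f)

/-- indices where `e` hits the block `S` -/
def hits (e : Fin K → Fin N) (S : Finset (Fin N)) : Finset (Fin K) :=
  univ.filter (fun i => e i ∈ S)

/-- distinct values of `e` occurring strictly before the first occurrence of `f` -/
def prevF (e : Fin K → Fin N) (f : Fin N) : Finset (Fin N) :=
  univ.filter (fun f' => ∃ i, e i = f' ∧ ∀ i' ≤ i, e i' ≠ f)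

/-- the rank of `f` in order of first occurrence (1-based) -/
def qrank (e : Fin K → Fin N) (f : Fin N) : ℕ := (prevF e f).card + 1

/-- the set of "leaders" up to the first hit of `S`: fresh indices `≤` the first hit -/
def Lset (e : Fin K → Fin N) (S : Finset (Fin N)) : Finset (Fin K) :=
  if h : (hits e S).Nonempty then
    univ.filter (fun i => i ≤ (hits e S).min' h ∧ ∀ i' < i, e i' ≠ e i)
  else ∅

/-- `f` is the value of the first index hitting `S` -/
def isFirstHit (e : Fin K → Fin N) (S : Finset (Fin N)) (f : Fin N) : Prop :=
  f ∈ S ∧ ∃ i, e i = f ∧ ∀ i' < i, e i' ∉ S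

instance (e : Fin K → Fin N) (S : Finset (Fin N)) (f : Fin N) :
    Decidable (isFirstHit e S f) :=
  decidable_of_iff (f ∈ S ∧ ∃ i, e i = f ∧ ∀ i' < i, e i' ∉ S) Iff.rfl

lemma occs_nonempty {e : Fin K → Fin N} {f : Fin N} (hf : f ∈ univ.image e) :
    (occs e f).Nonempty := by
  rcases Finset.mem_image.1 hf with ⟨i, -, rfl⟩
  exact ⟨i, by simp [occs]⟩

lemma first_occ_apply {e : Fin K → Fin N} {f : Fin N} (h : (occs e f).Nonempty) :
    e ((occs e f).min' h) = f := by
  have := Finset.min'_mem (occs e f) h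
  simpa [occs] using this

lemma first_occ_lt {e : Fin K → Fin N} {f : Fin N} (h : (occs e f).Nonempty)
    {i : Fin K} (hi : i < (occs e f).min' h) : e i ≠ f := by
  intro hei
  exact absurd (Finset.min'_le _ i (by simp [occs, hei])) (not_le.2 hi)

lemma mem_prevF_iff {e : Fin K → Fin N} {f : Fin N} (hf : f ∈ univ.image e) {f' : Fin N} :
    f' ∈ prevF e f ↔ ∃ i, e i = f' ∧ i < (occs e f).min' (occs_nonempty hf) := by
  simp only [prevF, Finset.mem_filter, Finset.mem_univ, true_and]
  constructor
  · rintro ⟨i, rfl, hlt⟩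
    refine ⟨i, rfl, ?_⟩
    by_contra hle
    exact hlt _ (not_lt.1 hle) (first_occ_apply (occs_nonempty hf))
  · rintro ⟨i, rfl, hlt⟩
    exact ⟨i, rfl, fun i' hi' => first_occ_lt _ (lt_of_le_of_lt hi' hlt)⟩

lemma prevF_subset_image {e : Fin K → Fin N} {f : Fin N} : prevF e f ⊆ univ.image e := by
  intro f' hf'
  simp only [prevF, Finset.mem_filter] at hf'
  rcases hf'.2 with ⟨i, rfl, -⟩
  exact Finset.mem_image_of_mem _ (Finset.mem_univ i)

lemma self_not_mem_prevF {e : Fin K → Fin N} {f : Fin N} : f ∉ prevF e f := by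
  simp only [prevF, Finset.mem_filter, Finset.mem_univ, true_and]
  rintro ⟨i, rfl, hne⟩
  exact hne i le_rfl rfl

lemma qrank_mem_Icc {e : Fin K → Fin N} {f : Fin N} (hf : f ∈ univ.image e) :
    qrank e f ∈ Finset.Icc 1 (univ.image e).card := by
  rw [Finset.mem_Icc]
  refine ⟨Nat.le_add_left _ _, ?_⟩
  have hsub : prevF e f ⊆ (univ.image e).erase f := by
    intro f' hf'
    rw [Finset.mem_erase]
    exact ⟨fun h => self_not_mem_prevF (h ▸ hf'), prevF_subset_image hf'⟩
  have := Finset.card_le_card hsub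
  rw [Finset.card_erase_of_mem hf] at this
  have hpos : 1 ≤ (univ.image e).card := Finset.card_pos.2 ⟨f, hf⟩
  unfold qrank
  omega

lemma prevF_card_lt {e : Fin K → Fin N} {f f' : Fin N} (hf : f ∈ univ.image e)
    (hf' : f' ∈ univ.image e)
    (hlt : (occs e f').min' (occs_nonempty hf') < (occs e f).min' (occs_nonempty hf)) :
    (prevF e f').card < (prevF e f).card := by
  have hsub : prevF e f' ⊆ prevF e f := by
    intro g hg
    rw [mem_prevF_iff hf'] at hg
    rw [mem_prevF_iff hf]
    rcases hg with ⟨i, hi, hilt⟩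
    exact ⟨i, hi, lt_trans hilt hlt⟩
  have hmem : f' ∈ prevF e f := by
    rw [mem_prevF_iff hf]
    exact ⟨_, first_occ_apply (occs_nonempty hf'), hlt⟩
  exact Finset.card_lt_card ⟨hsub, fun hall => self_not_mem_prevF (hall hmem)⟩

lemma qrank_injOn {e : Fin K → Fin N} :
    Set.InjOn (qrank e) (univ.image e : Finset (Fin N)) := by
  intro f hf f' hf' heq
  simp only [Finset.coe_image, Set.mem_image] at hf hf'
  have hf : f ∈ univ.image e := by
    rcases hf with ⟨i, -, rfl⟩; exact Finset.mem_image_of_mem _ (Finset.mem_univ i)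
  have hf' : f' ∈ univ.image e := by
    rcases hf' with ⟨i, -, rfl⟩; exact Finset.mem_image_of_mem _ (Finset.mem_univ i)
  by_contra hne
  have hIne : (occs e f).min' (occs_nonempty hf) ≠ (occs e f').min' (occs_nonempty hf') := by
    intro h
    apply hne
    rw [← first_occ_apply (occs_nonempty hf), ← first_occ_apply (occs_nonempty hf'), h]
  rcases lt_or_gt_of_ne hIne with h | h
  · exact absurd heq (by have := prevF_card_lt hf' hf h; unfold qrank; omega)
  · exact absurd heq (by have := prevF_card_lt hf hf' h; unfold qrank; omega)

lemma qrank_image_eq {e : Fin K → Fin N} :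
    (univ.image e).image (qrank e) = Finset.Icc 1 (univ.image e).card := by
  apply Finset.eq_of_subset_of_card_le
  · intro j hj
    rcases Finset.mem_image.1 hj with ⟨f, hf, rfl⟩
    exact qrank_mem_Icc hf
  · rw [Nat.card_Icc]
    rw [Finset.card_image_of_injOn qrank_injOn]
    omega

/-- reindexing a sum over distinct values by rank -/
lemma sum_qrank_reindex {e : Fin K → Fin N} (G : ℕ → ℕ) :
    ∑ f ∈ univ.image e, G (qrank e f) = ∑ j ∈ Finset.Icc 1 (univ.image e).card, G j := by
  rw [← qrank_image_eq, Finset.sum_image (fun x hx y hy h => qrank_injOn hx hy h)]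

lemma isFirstHit_unique {e : Fin K → Fin N} {S : Finset (Fin N)} {f f' : Fin N}
    (h1 : isFirstHit e S f) (h2 : isFirstHit e S f') : f = f' := by
  obtain ⟨hfS, i, rfl, hi⟩ := h1
  obtain ⟨hf'S, i', rfl, hi'⟩ := h2
  rcases lt_trichotomy i i' with h | h | h
  · exact absurd hfS (hi' i h)
  · rw [h]
  · exact absurd hf'S (hi i' h)

lemma isFirstHit_minHit {e : Fin K → Fin N} {S : Finset (Fin N)}
    (h : (hits e S).Nonempty) : isFirstHit e S (e ((hits e S).min' h)) := by
  have hmem := Finset.min'_mem (hits e S) h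
  simp only [hits, Finset.mem_filter, Finset.mem_univ, true_and] at hmem
  refine ⟨hmem, (hits e S).min' h, rfl, fun i' hi' hmem' => ?_⟩
  exact absurd (Finset.min'_le _ i' (by simp [hits, hmem'])) (not_le.2 hi')

lemma isFirstHit.hits_nonempty {e : Fin K → Fin N} {S : Finset (Fin N)} {f : Fin N}
    (h : isFirstHit e S f) : (hits e S).Nonempty := by
  obtain ⟨hfS, i, hef, -⟩ := h
  exact ⟨i, by simp [hits, hef, hfS]⟩

lemma isFirstHit.mem_image {e : Fin K → Fin N} {S : Finset (Fin N)} {f : Fin N}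
    (h : isFirstHit e S f) : f ∈ univ.image e := by
  obtain ⟨-, i, rfl, -⟩ := h
  exact Finset.mem_image_of_mem _ (Finset.mem_univ i)

lemma Lset_card {e : Fin K → Fin N} {S : Finset (Fin N)} (h : (hits e S).Nonempty)
    {f : Fin N} (hf : isFirstHit e S f) : (Lset e S).card = qrank e f := by
  have hfeq : f = e ((hits e S).min' h) := isFirstHit_unique hf (isFirstHit_minHit h)
  subst hfeq
  set i₀ := (hits e S).min' h with hi₀
  have hi₀S : e i₀ ∈ S := by
    have := Finset.min'_mem (hits e S) h
    unfold hits at this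
    exact (Finset.mem_filter.1 this).2
  have hlt : ∀ i : Fin K, i < i₀ → e i ∉ S := by
    intro i hi hiS
    exact absurd (Finset.min'_le _ i (by simp [hits, hiS])) (not_le.2 hi)
  have himg : e i₀ ∈ univ.image e := Finset.mem_image_of_mem _ (Finset.mem_univ i₀)
  -- first occurrence of e i₀ is i₀
  have hIocc : (occs e (e i₀)).min' (occs_nonempty himg) = i₀ := by
    apply le_antisymm
    · exact Finset.min'_le _ _ (by simp [occs])
    · by_contra hc
      push_neg at hc
      refine hlt _ hc ?_
      rw [first_occ_apply (occs_nonempty himg)]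
      exact hi₀S
  have hfresh : ∀ i' : Fin K, i' < i₀ → e i' ≠ e i₀ := by
    intro i' hi' heq
    exact hlt i' hi' (heq ▸ hi₀S)
  -- Lset = insert i₀ {i < i₀ fresh}
  have hsplit : Lset e S = insert i₀
      (univ.filter (fun i => i < i₀ ∧ ∀ i' < i, e i' ≠ e i)) := by
    rw [Lset, dif_pos h]
    ext i
    simp only [Finset.mem_filter, Finset.mem_univ, true_and, Finset.mem_insert]
    constructor
    · rintro ⟨hle, hfr⟩
      rcases eq_or_lt_of_le hle with heq | hlt'
      · exact Or.inl heq
      · exact Or.inr ⟨hlt', hfr⟩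
    · rintro (rfl | ⟨hlt', hfr⟩)
      · exact ⟨le_rfl, hfresh⟩
      · exact ⟨le_of_lt hlt', hfr⟩
  rw [hsplit, Finset.card_insert_of_notMem (by simp), qrank]
  congr 1
  -- bijection between fresh indices < i₀ and prevF
  apply Finset.card_bij (fun i _ => e i)
  · intro i hi
    simp only [Finset.mem_filter, Finset.mem_univ, true_and] at hi
    rw [mem_prevF_iff himg]
    exact ⟨i, rfl, by rw [hIocc]; exact hi.1⟩
  · intro i hi i' hi' heq
    simp only [Finset.mem_filter, Finset.mem_univ, true_and] at hi hi'
    by_contra hne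
    rcases lt_or_gt_of_ne hne with hc | hc
    · exact hi'.2 i hc heq
    · exact hi.2 i' hc heq.symm
  · intro f' hf'
    rw [mem_prevF_iff himg, hIocc] at hf'
    obtain ⟨i, rfl, hilt⟩ := hf'
    have hocc : (occs e (e i)).Nonempty := ⟨i, by simp [occs]⟩
    refine ⟨(occs e (e i)).min' hocc, ?_, (first_occ_apply hocc)⟩
    simp only [Finset.mem_filter, Finset.mem_univ, true_and]
    constructor
    · exact lt_of_le_of_lt (Finset.min'_le _ i (by simp [occs])) hilt
    · intro i' hi' heq
      exact first_occ_lt hocc hi' (heq.trans (first_occ_apply hocc))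

lemma isFirstHit_iff {e : Fin K → Fin N} {f : Fin N} (hf : f ∈ univ.image e)
    (S : Finset (Fin N)) : isFirstHit e S f ↔ f ∈ S ∧ Disjoint S (prevF e f) := by
  constructor
  · rintro ⟨hfS, i, rfl, hi⟩
    refine ⟨hfS, Finset.disjoint_left.2 fun f' hf'S hf'p => ?_⟩
    rw [mem_prevF_iff hf] at hf'p
    obtain ⟨i', rfl, hi'lt⟩ := hf'p
    have hile : (occs e (e i)).min' (occs_nonempty hf) ≤ i := Finset.min'_le _ i (by simp [occs])
    exact hi i' (lt_of_lt_of_le hi'lt hile) hf'S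
  · rintro ⟨hfS, hdisj⟩
    refine ⟨hfS, (occs e f).min' (occs_nonempty hf), first_occ_apply _, ?_⟩
    intro i' hi' hi'S
    have : e i' ∈ prevF e f := by
      rw [mem_prevF_iff hf]
      exact ⟨i', rfl, hi'⟩
    exact Finset.disjoint_left.1 hdisj hi'S this

lemma fiber_card {e : Fin K → Fin N} {f : Fin N} (hf : f ∈ univ.image e)
    {r : ℕ} (hr : 1 ≤ r) :
    ((Finset.powersetCard r (univ : Finset (Fin N))).filter
      (fun S => isFirstHit e S f)).card = (N - qrank e f).choose (r - 1) := by
  have hfilter : (Finset.powersetCard r (univ : Finset (Fin N))).filter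
      (fun S => isFirstHit e S f) = (Finset.powersetCard r (univ : Finset (Fin N))).filter
      (fun S => f ∈ S ∧ Disjoint S (prevF e f)) := by
    apply Finset.filter_congr
    intro S _
    simp only [isFirstHit_iff hf S]
  rw [hfilter]
  have htarget : (Finset.powersetCard (r - 1)
      (((univ : Finset (Fin N)) \ prevF e f).erase f)).card
      = (N - qrank e f).choose (r - 1) := by
    rw [Finset.card_powersetCard, Finset.card_erase_of_mem (by simp [self_not_mem_prevF]),
      Finset.card_sdiff_of_subset (Finset.subset_univ _), Finset.card_univ, Fintype.card_fin, qrank]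
    have harith : N - (prevF e f).card - 1 = N - ((prevF e f).card + 1) := by omega
    rw [harith]
  rw [← htarget]
  refine Finset.card_bij' (fun S _ => S.erase f) (fun T _ => insert f T) ?hi ?hj ?left ?right
  case hi =>
    intro S hS
    simp only [Finset.mem_filter, Finset.mem_powersetCard] at hS
    obtain ⟨⟨-, hcard⟩, hfS, hdisj⟩ := hS
    rw [Finset.mem_powersetCard]
    constructor
    · intro x hx
      rw [Finset.mem_erase] at hx ⊢
      refine ⟨hx.1, Finset.mem_sdiff.2 ⟨Finset.mem_univ _, ?_⟩⟩
      exact fun hxp => Finset.disjoint_left.1 hdisj hx.2 hxp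
    · rw [Finset.card_erase_of_mem hfS, hcard]
  case hj =>
    intro T hT
    rw [Finset.mem_powersetCard] at hT
    obtain ⟨hsub, hcard⟩ := hT
    have hfT : f ∉ T := fun hfT => by simpa using (hsub hfT)
    simp only [Finset.mem_filter, Finset.mem_powersetCard]
    refine ⟨⟨Finset.subset_univ _, ?_⟩, Finset.mem_insert_self _ _, ?_⟩
    · rw [Finset.card_insert_of_notMem hfT, hcard]
      omega
    · rw [Finset.disjoint_left]
      intro a ha hap
      rcases Finset.mem_insert.1 ha with rfl | haT
      · exact self_not_mem_prevF hap
      · have := hsub haT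
        rw [Finset.mem_erase, Finset.mem_sdiff] at this
        exact this.2.2 hap
  case left =>
    intro S hS
    simp only [Finset.mem_filter] at hS
    exact Finset.insert_erase hS.2.1
  case right =>
    intro T hT
    rw [Finset.mem_powersetCard] at hT
    have hfT : f ∉ T := fun hfT => by simpa using (hT.1 hfT)
    exact Finset.erase_insert hfT

/-- Lemma C: the per-demand sum over blocks. -/
lemma sum_blocks (e : Fin K → Fin N) (r t : ℕ) (hr : 1 ≤ r) :
    ∑ S ∈ Finset.powersetCard r (univ : Finset (Fin N)),
      (if (hits e S).Nonempty then (K - (Lset e S).card).choose t else 0)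
    = ∑ j ∈ Finset.Icc 1 (univ.image e).card,
        (N - j).choose (r - 1) * (K - j).choose t := by
  have step1 : ∀ S ∈ Finset.powersetCard r (univ : Finset (Fin N)),
      (if (hits e S).Nonempty then (K - (Lset e S).card).choose t else 0)
      = ∑ f ∈ univ.image e,
          (if isFirstHit e S f then (K - qrank e f).choose t else 0) := by
    intro S _
    by_cases h : (hits e S).Nonempty
    · rw [if_pos h]
      set f₀ := e ((hits e S).min' h) with hf₀
      have hfh : isFirstHit e S f₀ := isFirstHit_minHit h
      rw [Finset.sum_eq_single f₀]
      · rw [if_pos hfh, Lset_card h hfh]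
      · intro f hf hne
        rw [if_neg]
        exact fun hc => hne (isFirstHit_unique hc hfh)
      · intro hc
        exact absurd hfh.mem_image hc
    · rw [if_neg h]
      symm
      apply Finset.sum_eq_zero
      intro f _
      rw [if_neg]
      exact fun hc => h hc.hits_nonempty
  rw [Finset.sum_congr rfl step1, Finset.sum_comm]
  have step2 : ∀ f ∈ univ.image e,
      ∑ S ∈ Finset.powersetCard r (univ : Finset (Fin N)),
        (if isFirstHit e S f then (K - qrank e f).choose t else 0)
      = (N - qrank e f).choose (r - 1) * (K - qrank e f).choose t := by
    intro f hf
    rw [← Finset.sum_filter, Finset.sum_const, smul_eq_mul, fiber_card hf hr]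
  rw [Finset.sum_congr rfl step2]
  exact sum_qrank_reindex (fun j => (N - j).choose (r - 1) * (K - j).choose t)

/-- Lemma D: restricting the range to the nonzero terms. -/
lemma sum_tail {r : ℕ} (s t : ℕ) (hsN : s ≤ N) (hsK : s ≤ K) :
    ∑ j ∈ Finset.Icc 1 (min (N - r + 1) (min (K - t) s)),
        (N - j).choose (r - 1) * (K - j).choose t
    = ∑ j ∈ Finset.Icc 1 s, (N - j).choose (r - 1) * (K - j).choose t := by
  apply Finset.sum_subset
  · apply Finset.Icc_subset_Icc_right
    omega
  · intro j hj hnj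
    rw [Finset.mem_Icc] at hj
    rw [Finset.mem_Icc] at hnj
    push_neg at hnj
    have hbig := hnj hj.1
    rcases Nat.lt_or_ge (N - r + 1) j with h1 | h1
    · have : N - j < r - 1 := by omega
      rw [Nat.choose_eq_zero_of_lt this, zero_mul]
    · have h2 : K - t < j := by omega
      have : K - j < t := by omega
      rw [Nat.choose_eq_zero_of_lt this, mul_zero]

end Leaders
section Symmetry
variable {N K : ℕ}

lemma hits_comp (π : Equiv.Perm (Fin N)) (e : Fin K → Fin N) (S : Finset (Fin N)) :
    hits (π ∘ e) (S.image π) = hits e S := by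
  ext i
  simp only [hits, Finset.mem_filter, Finset.mem_univ, true_and, Function.comp_apply]
  rw [Finset.mem_image]
  constructor
  · rintro ⟨f, hf, hfe⟩
    rwa [← π.injective hfe]
  · intro h
    exact ⟨e i, h, rfl⟩

lemma Lset_comp (π : Equiv.Perm (Fin N)) (e : Fin K → Fin N) (S : Finset (Fin N)) :
    Lset (π ∘ e) (S.image π) = Lset e S := by
  unfold Lset
  by_cases h : (hits e S).Nonempty
  · rw [dif_pos (by rwa [hits_comp]), dif_pos h]
    apply Finset.filter_congr
    intro i _
    have hm : (hits (π ∘ e) (S.image π)).min' (by rwa [hits_comp]) = (hits e S).min' h := by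
      congr 1 <;> rw [hits_comp]
    rw [hm]
    simp only [Function.comp_apply, ne_eq, EmbeddingLike.apply_eq_iff_eq]
  · rw [dif_neg (by rwa [hits_comp]), dif_neg h]

lemma numDistinct_comp (π : Equiv.Perm (Fin N)) (e : Fin K → Fin N) :
    (univ.image (π ∘ e)).card = (univ.image e).card := by
  rw [← Finset.image_image, Finset.card_image_of_injective _ π.injective]

end Symmetry

section Assembly
variable {N K : ℕ}

lemma sum_hits_const {r : ℕ} (t : ℕ) {S S' : Finset (Fin N)} (hS : S.card = r)
    (hS' : S'.card = r) :
    ∑ e : Fin K → Fin N, (if (hits e S).Nonempty then (K - (Lset e S).card).choose t else 0)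
    = ∑ e : Fin K → Fin N,
        (if (hits e S').Nonempty then (K - (Lset e S').card).choose t else 0) := by
  obtain ⟨π, hπ⟩ := exists_perm_image_eq S S' (hS.trans hS'.symm)
  rw [← hπ]
  apply Fintype.sum_equiv (Equiv.arrowCongr (Equiv.refl (Fin K)) π)
  intro e
  have happ : (Equiv.arrowCongr (Equiv.refl (Fin K)) π) e = π ∘ e := by
    funext i; simp [Equiv.arrowCongr]
  rw [happ, hits_comp, Lset_comp]

lemma sum_demands_blocks {r : ℕ} (hr : 1 ≤ r) {S : Finset (Fin N)} (hS : S.card = r)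
    (t : ℕ) :
    (N.choose r) *
      (∑ e : Fin K → Fin N,
        (if (hits e S).Nonempty then (K - (Lset e S).card).choose t else 0))
    = ∑ e : Fin K → Fin N, ∑ j ∈ Finset.Icc 1 (univ.image e).card,
        (N - j).choose (r - 1) * (K - j).choose t := by
  have hconst : ∀ S' ∈ Finset.powersetCard r (univ : Finset (Fin N)),
      (∑ e : Fin K → Fin N,
        (if (hits e S').Nonempty then (K - (Lset e S').card).choose t else 0))
      = ∑ e : Fin K → Fin N,
        (if (hits e S).Nonempty then (K - (Lset e S).card).choose t else 0) := by
    intro S' hS'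
    exact sum_hits_const t (Finset.mem_powersetCard.1 hS').2 hS
  calc (N.choose r) *
      (∑ e : Fin K → Fin N,
        (if (hits e S).Nonempty then (K - (Lset e S).card).choose t else 0))
      = ∑ S' ∈ Finset.powersetCard r (univ : Finset (Fin N)),
          ∑ e : Fin K → Fin N,
            (if (hits e S').Nonempty then (K - (Lset e S').card).choose t else 0) := by
        rw [Finset.sum_congr rfl hconst, Finset.sum_const, Finset.card_powersetCard,
          Finset.card_univ, Fintype.card_fin, smul_eq_mul]
    _ = ∑ e : Fin K → Fin N, ∑ S' ∈ Finset.powersetCard r (univ : Finset (Fin N)),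
          (if (hits e S').Nonempty then (K - (Lset e S').card).choose t else 0) :=
        Finset.sum_comm
    _ = ∑ e : Fin K → Fin N, ∑ j ∈ Finset.Icc 1 (univ.image e).card,
          (N - j).choose (r - 1) * (K - j).choose t :=
        Finset.sum_congr rfl (fun e _ => sum_blocks e r t hr)

end Assembly

section Scheme
variable {N K r b : ℕ} {M : ℝ}

/-- The decodable set of positions for a demand `d` and an ordering `u` of the users. -/
def Tset (sch : UncodedCachingScheme N K r b M) (d : Fin K → Fin N)
    (u : Equiv.Perm (Fin K)) : Finset (Pos N r b) :=
  univ.filter (fun p => (hits (d ∘ u) p.1.1).Nonempty ∧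
    ∀ i ∈ Lset (d ∘ u) p.1.1, p ∉ sch.cache (u i))

/-- Lemma A : the cut-set/decodability bound. -/
lemma Tset_card_le (sch : UncodedCachingScheme N K r b M) (d : Fin K → Fin N)
    (u : Equiv.Perm (Fin K)) : (Tset sch d u).card ≤ sch.len d := by
  classical
  set e := d ∘ u with he
  set T := Tset sch d u with hTdef
  have hmemT : ∀ p : Pos N r b, p ∈ T ↔ ((hits e p.1.1).Nonempty ∧
      ∀ i ∈ Lset e p.1.1, p ∉ sch.cache (u i)) := by
    intro p
    simp [hTdef, Tset, he]
  let ext : ({p // p ∈ T} → Bool) → Lib N r b :=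
    fun σ p => if h : p ∈ T then σ ⟨p, h⟩ else false
  have hinj : Function.Injective (fun σ : {p // p ∈ T} → Bool => sch.enc d (ext σ)) := by
    intro σ σ' hEq
    simp only [] at hEq
    have key : ∀ n : ℕ, ∀ p : Pos N r b, ∀ hp : p ∈ T,
        (((hits e p.1.1).min' ((hmemT p).1 hp).1).val < n) → ext σ p = ext σ' p := by
      intro n
      induction n with
      | zero => exact fun p hp h => absurd h (Nat.not_lt_zero _)
      | succ n ih =>
        intro p hp hlt
        obtain ⟨hne, havoid⟩ := (hmemT p).1 hp
        set i₀ := (hits e p.1.1).min' hne with hi₀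
        have hi₀mem : e i₀ ∈ p.1.1 := by
          have := Finset.min'_mem (hits e p.1.1) hne
          unfold hits at this
          exact (Finset.mem_filter.1 this).2
        have hdem : d (u i₀) ∈ p.1.1 := hi₀mem
        have hfresh : ∀ i' < i₀, e i' ≠ e i₀ := by
          intro i' hi' heq
          have : i' ∈ hits e p.1.1 := by simp [hits, heq, hi₀mem]
          exact absurd (Finset.min'_le _ i' this) (not_le.2 hi')
        have hmask : maskedCache (sch.cache (u i₀)) (ext σ) =
            maskedCache (sch.cache (u i₀)) (ext σ') := by
          funext q
          unfold maskedCache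
          by_cases hq : q ∈ sch.cache (u i₀)
          · rw [if_pos hq, if_pos hq]
            by_cases hqT : q ∈ T
            · obtain ⟨hneq, havoidq⟩ := (hmemT q).1 hqT
              have hi₀notL : i₀ ∉ Lset e q.1.1 := by
                intro hmem
                exact (havoidq i₀ hmem) hq
              have hminlt : ((hits e q.1.1).min' hneq) < i₀ := by
                by_contra hc
                push_neg at hc
                apply hi₀notL
                rw [Lset, dif_pos hneq]
                simp only [Finset.mem_filter, Finset.mem_univ, true_and]
                exact ⟨hc, hfresh⟩
              exact ih q hqT (by omega)
            · simp only [ext, dif_neg hqT]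
          · rw [if_neg hq, if_neg hq]
        have h1 := sch.correct d (ext σ) (u i₀) p hdem
        have h2 := sch.correct d (ext σ') (u i₀) p hdem
        rw [← h1, ← h2, hmask, hEq]
    funext pp
    obtain ⟨p, hp⟩ := pp
    have hK : (((hits e p.1.1).min' ((hmemT p).1 hp).1).val < K + 1) := by
      have := (((hits e p.1.1).min' ((hmemT p).1 hp).1)).isLt
      omega
    have := key (K + 1) p hp hK
    simpa [ext, dif_pos hp] using this
  have hcard := Fintype.card_le_of_injective _ hinj
  rw [Fintype.card_fun, Fintype.card_fun] at hcard
  simp only [Fintype.card_coe, Fintype.card_bool, Fintype.card_fin] at hcard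
  exact (Nat.pow_le_pow_iff_right (by norm_num : 1 < 2)).1 hcard

/-- Users caching position `p`. -/
def Uset (sch : UncodedCachingScheme N K r b M) (p : Pos N r b) : Finset (Fin K) :=
  univ.filter (fun k => p ∈ sch.cache k)

lemma mem_Tset_iff (sch : UncodedCachingScheme N K r b M) (d : Fin K → Fin N)
    (u : Equiv.Perm (Fin K)) (p : Pos N r b) :
    p ∈ Tset sch d u ↔ ((hits (d ∘ u) p.1.1).Nonempty ∧
      ∀ i ∈ Lset (d ∘ u) p.1.1, u i ∉ Uset sch p) := by
  simp [Tset, Uset]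

lemma per_position (sch : UncodedCachingScheme N K r b M) (p : Pos N r b) :
    (∑ d : Fin K → Fin N, ∑ u : Equiv.Perm (Fin K),
        (if p ∈ Tset sch d u then 1 else 0)) * (K.choose (Uset sch p).card)
    = (∑ e : Fin K → Fin N, (if (hits e p.1.1).Nonempty then
        (K - (Lset e p.1.1).card).choose (Uset sch p).card else 0))
      * (Fintype.card (Equiv.Perm (Fin K))) := by
  classical
  have hswap : ∑ d : Fin K → Fin N, ∑ u : Equiv.Perm (Fin K),
        (if p ∈ Tset sch d u then 1 else 0)
      = ∑ e : Fin K → Fin N, ∑ u : Equiv.Perm (Fin K),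
        (if ((hits e p.1.1).Nonempty ∧ ∀ i ∈ Lset e p.1.1, u i ∉ Uset sch p)
          then 1 else 0) := by
    calc ∑ d : Fin K → Fin N, ∑ u : Equiv.Perm (Fin K),
          (if p ∈ Tset sch d u then 1 else 0)
        = ∑ u : Equiv.Perm (Fin K), ∑ d : Fin K → Fin N,
          (if p ∈ Tset sch d u then 1 else 0) := Finset.sum_comm
      _ = ∑ u : Equiv.Perm (Fin K), ∑ e : Fin K → Fin N,
          (if ((hits e p.1.1).Nonempty ∧ ∀ i ∈ Lset e p.1.1, u i ∉ Uset sch p)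
            then 1 else 0) := by
          apply Finset.sum_congr rfl
          intro u _
          apply Fintype.sum_equiv (Equiv.arrowCongr u.symm (Equiv.refl (Fin N)))
          intro d
          have happ : (Equiv.arrowCongr u.symm (Equiv.refl (Fin N))) d = d ∘ u := by
            funext i; simp [Equiv.arrowCongr]
          rw [happ]
          congr 1
          rw [eq_iff_iff]
          exact mem_Tset_iff sch d u p
      _ = ∑ e : Fin K → Fin N, ∑ u : Equiv.Perm (Fin K),
          (if ((hits e p.1.1).Nonempty ∧ ∀ i ∈ Lset e p.1.1, u i ∉ Uset sch p)
            then 1 else 0) := Finset.sum_comm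
  have hinner : ∀ e : Fin K → Fin N,
      (∑ u : Equiv.Perm (Fin K),
        (if ((hits e p.1.1).Nonempty ∧ ∀ i ∈ Lset e p.1.1, u i ∉ Uset sch p)
          then 1 else 0))
      = (if (hits e p.1.1).Nonempty then
          ((univ : Finset (Equiv.Perm (Fin K))).filter
            (fun u => ∀ i ∈ Lset e p.1.1, u i ∉ Uset sch p)).card
        else 0) := by
    intro e
    by_cases h : (hits e p.1.1).Nonempty
    · rw [if_pos h, Finset.card_filter]
      apply Finset.sum_congr rfl
      intro u _
      simp [h]
    · rw [if_neg h]
      apply Finset.sum_eq_zero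
      intro u _
      simp [h]
  rw [hswap, Finset.sum_congr rfl (fun e _ => hinner e), Finset.sum_mul, Finset.sum_mul]
  apply Finset.sum_congr rfl
  intro e _
  by_cases h : (hits e p.1.1).Nonempty
  · rw [if_pos h, if_pos h]
    have := perm_avoid_count (α := Fin K) (Lset e p.1.1) (Uset sch p)
    rw [Fintype.card_fin] at this
    convert this using 3
    ext u
    simp only [Finset.mem_filter]
  · simp [h]

lemma count_bound (sch : UncodedCachingScheme N K r b M) :
    ∑ p : Pos N r b, ∑ d : Fin K → Fin N, ∑ u : Equiv.Perm (Fin K),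
      (if p ∈ Tset sch d u then 1 else 0)
    ≤ Fintype.card (Equiv.Perm (Fin K)) * ∑ d : Fin K → Fin N, sch.len d := by
  classical
  have h1 : ∀ (d : Fin K → Fin N) (u : Equiv.Perm (Fin K)),
      (∑ p : Pos N r b, (if p ∈ Tset sch d u then 1 else 0)) = (Tset sch d u).card := by
    intro d u
    have hT : Tset sch d u = univ.filter (fun p => p ∈ Tset sch d u) := by
      simp
    conv_rhs => rw [hT]
    rw [Finset.card_filter]
  calc ∑ p : Pos N r b, ∑ d : Fin K → Fin N, ∑ u : Equiv.Perm (Fin K),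
        (if p ∈ Tset sch d u then 1 else 0)
      = ∑ d : Fin K → Fin N, ∑ p : Pos N r b, ∑ u : Equiv.Perm (Fin K),
        (if p ∈ Tset sch d u then 1 else 0) := Finset.sum_comm
    _ = ∑ d : Fin K → Fin N, ∑ u : Equiv.Perm (Fin K), ∑ p : Pos N r b,
        (if p ∈ Tset sch d u then 1 else 0) := Finset.sum_congr rfl (fun _ _ => Finset.sum_comm)
    _ = ∑ d : Fin K → Fin N, ∑ u : Equiv.Perm (Fin K), (Tset sch d u).card :=
        Finset.sum_congr rfl (fun d _ => Finset.sum_congr rfl (fun u _ => h1 d u))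
    _ ≤ ∑ d : Fin K → Fin N, ∑ u : Equiv.Perm (Fin K), sch.len d := by
        apply Finset.sum_le_sum
        intro d _
        exact Finset.sum_le_sum (fun u _ => Tset_card_le sch d u)
    _ = Fintype.card (Equiv.Perm (Fin K)) * ∑ d : Fin K → Fin N, sch.len d := by
        rw [Finset.sum_comm, Finset.sum_const, Finset.card_univ, smul_eq_mul]

lemma cache_double_count (sch : UncodedCachingScheme N K r b M) :
    ∑ p : Pos N r b, (Uset sch p).card = ∑ k : Fin K, (sch.cache k).card := by
  classical
  have h1 : ∀ p : Pos N r b, (Uset sch p).card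
      = ∑ k : Fin K, (if p ∈ sch.cache k then 1 else 0) := by
    intro p
    have hU : Uset sch p = univ.filter (fun k => p ∈ sch.cache k) := rfl
    rw [hU, Finset.card_filter]
  rw [Finset.sum_congr rfl (fun p _ => h1 p), Finset.sum_comm]
  apply Finset.sum_congr rfl
  intro k _
  have hC : sch.cache k = univ.filter (fun p => p ∈ sch.cache k) := by simp
  conv_rhs => rw [hC]
  rw [Finset.card_filter]


end Scheme

section RealAssembly

lemma avgC_K_zero (N K r : ℕ) : avgC N K r K = 0 := by
  have h : ∀ s, cst N K r s K = 0 := by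
    intro s
    unfold cst
    rw [Nat.sub_self]
    have : min (N - r + 1) (min 0 s) = 0 := by omega
    rw [this]
    have hempty : Finset.Icc 1 0 = (∅ : Finset ℕ) := by
      apply Finset.Icc_eq_empty
      omega
    rw [hempty, Finset.sum_empty, zero_div]
  simp [avgC, h]

lemma choose_identity {N r : ℕ} (hN : 1 ≤ N) (hr : 1 ≤ r) :
    N * (N - 1).choose (r - 1) = r * N.choose r := by
  have h := Nat.add_one_mul_choose_eq (N - 1) (r - 1)
  have h1 : N - 1 + 1 = N := by omega
  have h2 : r - 1 + 1 = r := by omega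
  rw [h1, h2] at h
  rw [h, mul_comm]

lemma Psi_eq (N K r t : ℕ) (hN : 1 ≤ N) (hr : 1 ≤ r) (hrN : r ≤ N) (ht : t ≤ K) :
    ((∑ e : Fin K → Fin N, ∑ j ∈ Finset.Icc 1 (univ.image e).card,
        (N - j).choose (r - 1) * (K - j).choose t : ℕ) : ℝ)
    = (N : ℝ) ^ K * avgC N K r t * (((N - 1).choose (r - 1) : ℕ) : ℝ)
        * ((K.choose t : ℕ) : ℝ) := by
  have hD1 : (0 : ℝ) < (((N - 1).choose (r - 1) : ℕ) : ℝ) := by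
    exact_mod_cast Nat.choose_pos (by omega)
  have hcK : (0 : ℝ) < ((K.choose t : ℕ) : ℝ) := by
    exact_mod_cast Nat.choose_pos ht
  have hNK : ((N : ℝ)) ^ K ≠ 0 := by positivity
  have hper : ∀ e : Fin K → Fin N,
      ((∑ j ∈ Finset.Icc 1 (univ.image e).card,
        (N - j).choose (r - 1) * (K - j).choose t : ℕ) : ℝ)
      = cst N K r (numDistinct e) t * ((((N - 1).choose (r - 1) : ℕ) : ℝ)
          * ((K.choose t : ℕ) : ℝ)) := by
    intro e
    have hsN : (univ.image e).card ≤ N := by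
      simpa using Finset.card_le_univ (univ.image e)
    have hsK : (univ.image e).card ≤ K := by
      have := Finset.card_image_le (s := (univ : Finset (Fin K))) (f := e)
      rwa [Finset.card_univ, Fintype.card_fin] at this
    have htail := sum_tail (N := N) (K := K) (r := r) (univ.image e).card t hsN hsK
    rw [cst]
    rw [div_mul_cancel₀ _ (by positivity)]
    have : numDistinct e = (univ.image e).card := rfl
    rw [this, ← htail]
    push_cast
    rfl
  rw [Nat.cast_sum, Finset.sum_congr rfl (fun e _ => hper e), ← Finset.sum_mul, avgC]
  field_simp

lemma scheme_bound (N K r : ℕ) (hN : 1 ≤ N) (hK : 1 ≤ K) (hr : 1 ≤ r) (hrN : r ≤ N)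
    {M : ℝ} (hM0 : 0 ≤ M) (hM1 : M ≤ (N : ℝ) / r) {b : ℕ} (hb : 0 < b)
    (sch : UncodedCachingScheme N K r b M)
    (g : ℝ → ℝ) (hg : ConvexOn ℝ (Set.Icc 0 ((N : ℝ) / r)) g)
    (hgpts : ∀ t : ℕ, t ≤ K → g (((N : ℝ) * t) / ((K : ℝ) * r)) ≤ avgC N K r t) :
    g M ≤ (∑ dem : Fin K → Fin N, ((sch.len dem : ℕ) : ℝ)) /
      (((N : ℝ) ^ K) * ((b * Nat.choose (N - 1) (r - 1) : ℕ) : ℝ)) := by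
  classical
  set t : Pos N r b → ℕ := fun p => (Uset sch p).card with ht
  have ht_le : ∀ p, t p ≤ K := by
    intro p
    rw [ht]
    simpa using Finset.card_le_univ (Uset sch p)
  set x : Pos N r b → ℕ := fun p => ∑ d : Fin K → Fin N, ∑ u : Equiv.Perm (Fin K),
    (if p ∈ Tset sch d u then 1 else 0) with hx
  set permR : ℝ := (Fintype.card (Equiv.Perm (Fin K)) : ℝ) with hpermR
  have hperm_pos : 0 < permR := by
    rw [hpermR]
    exact_mod_cast Fintype.card_pos
  have hNR : (0:ℝ) < (N:ℝ) := by exact_mod_cast hN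
  have hKR : (0:ℝ) < (K:ℝ) := by exact_mod_cast hK
  have hrR : (0:ℝ) < (r:ℝ) := by exact_mod_cast hr
  have hD1 : (0 : ℝ) < (((N - 1).choose (r - 1) : ℕ) : ℝ) := by
    exact_mod_cast Nat.choose_pos (by omega : r - 1 ≤ N - 1)
  have hC3 : (0 : ℝ) < ((N.choose r : ℕ) : ℝ) := by
    exact_mod_cast Nat.choose_pos hrN
  have hbR : (0:ℝ) < (b:ℝ) := by exact_mod_cast hb
  have hBpos : (0:ℝ) < ((b * Nat.choose (N - 1) (r - 1) : ℕ) : ℝ) := by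
    push_cast
    positivity
  have hNKpos : (0:ℝ) < (N:ℝ)^K := by positivity
  -- the choose identity, real version
  have hND : (N : ℝ) * (((N - 1).choose (r - 1) : ℕ) : ℝ)
      = (r : ℝ) * ((N.choose r : ℕ) : ℝ) := by
    exact_mod_cast choose_identity hN hr
  -- Step 1-2: per-position identity over the reals
  have step2 : ∀ p : Pos N r b, ((x p : ℕ) : ℝ) * (N : ℝ)
      = permR * ((N : ℝ) ^ K * avgC N K r (t p)) * (r : ℝ) := by
    intro p
    have step1 : x p * (K.choose (t p)) * (N.choose r)
        = (∑ e : Fin K → Fin N, ∑ j ∈ Finset.Icc 1 (univ.image e).card,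
            (N - j).choose (r - 1) * (K - j).choose (t p))
          * Fintype.card (Equiv.Perm (Fin K)) := by
      have hpp := per_position sch p
      have hsd := sum_demands_blocks (N := N) (K := K) hr p.1.2 (t p)
      calc x p * (K.choose (t p)) * (N.choose r)
          = ((∑ e : Fin K → Fin N, (if (hits e p.1.1).Nonempty then
              (K - (Lset e p.1.1).card).choose (t p) else 0))
            * Fintype.card (Equiv.Perm (Fin K))) * (N.choose r) := by rw [hpp]
        _ = ((N.choose r) * ∑ e : Fin K → Fin N, (if (hits e p.1.1).Nonempty then
              (K - (Lset e p.1.1).card).choose (t p) else 0))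
            * Fintype.card (Equiv.Perm (Fin K)) := by ring
        _ = (∑ e : Fin K → Fin N, ∑ j ∈ Finset.Icc 1 (univ.image e).card,
              (N - j).choose (r - 1) * (K - j).choose (t p))
            * Fintype.card (Equiv.Perm (Fin K)) := by rw [hsd]
    have hcast : ((x p : ℕ) : ℝ) * ((K.choose (t p) : ℕ) : ℝ) * ((N.choose r : ℕ) : ℝ)
        = ((∑ e : Fin K → Fin N, ∑ j ∈ Finset.Icc 1 (univ.image e).card,
            (N - j).choose (r - 1) * (K - j).choose (t p) : ℕ) : ℝ) * permR := by
      rw [hpermR]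
      exact_mod_cast congrArg (Nat.cast : ℕ → ℝ) step1
    rw [Psi_eq N K r (t p) hN hr hrN (ht_le p)] at hcast
    have hcK : (0 : ℝ) < ((K.choose (t p) : ℕ) : ℝ) := by
      exact_mod_cast Nat.choose_pos (ht_le p)
    -- cancel choose K (t p)
    have e1 : ((x p : ℕ) : ℝ) * ((N.choose r : ℕ) : ℝ)
        = (N : ℝ) ^ K * avgC N K r (t p) * (((N - 1).choose (r - 1) : ℕ) : ℝ) * permR := by
      apply mul_right_cancel₀ (ne_of_gt hcK)
      calc ((x p : ℕ) : ℝ) * ((N.choose r : ℕ) : ℝ) * ((K.choose (t p) : ℕ) : ℝ)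
          = ((x p : ℕ) : ℝ) * ((K.choose (t p) : ℕ) : ℝ) * ((N.choose r : ℕ) : ℝ) := by ring
        _ = (N : ℝ) ^ K * avgC N K r (t p) * (((N - 1).choose (r - 1) : ℕ) : ℝ)
              * ((K.choose (t p) : ℕ) : ℝ) * permR := hcast
        _ = (N : ℝ) ^ K * avgC N K r (t p) * (((N - 1).choose (r - 1) : ℕ) : ℝ) * permR
              * ((K.choose (t p) : ℕ) : ℝ) := by ring
    apply mul_right_cancel₀ (ne_of_gt hC3)
    calc ((x p : ℕ) : ℝ) * (N : ℝ) * ((N.choose r : ℕ) : ℝ)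
        = ((x p : ℕ) : ℝ) * ((N.choose r : ℕ) : ℝ) * (N : ℝ) := by ring
      _ = (N : ℝ) ^ K * avgC N K r (t p) * (((N - 1).choose (r - 1) : ℕ) : ℝ) * permR
            * (N : ℝ) := by rw [e1]
      _ = (N : ℝ) ^ K * avgC N K r (t p) * permR
            * ((N : ℝ) * (((N - 1).choose (r - 1) : ℕ) : ℝ)) := by ring
      _ = (N : ℝ) ^ K * avgC N K r (t p) * permR
            * ((r : ℝ) * ((N.choose r : ℕ) : ℝ)) := by rw [hND]
      _ = permR * ((N : ℝ) ^ K * avgC N K r (t p)) * (r : ℝ)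
            * ((N.choose r : ℕ) : ℝ) := by ring
  -- Step 3: summed bound
  have hsum_le : permR * ((N : ℝ) ^ K) * (r : ℝ) *
      (∑ p : Pos N r b, avgC N K r (t p))
      ≤ permR * (∑ d : Fin K → Fin N, ((sch.len d : ℕ) : ℝ)) * (N : ℝ) := by
    have hcb : ((∑ p : Pos N r b, x p : ℕ) : ℝ)
        ≤ permR * (∑ d : Fin K → Fin N, ((sch.len d : ℕ) : ℝ)) := by
      have := count_bound sch
      have hc : ((∑ p : Pos N r b, x p : ℕ) : ℝ)
          ≤ ((Fintype.card (Equiv.Perm (Fin K)) * ∑ d : Fin K → Fin N, sch.len d : ℕ) : ℝ) := by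
        exact_mod_cast this
      calc ((∑ p : Pos N r b, x p : ℕ) : ℝ)
          ≤ ((Fintype.card (Equiv.Perm (Fin K)) * ∑ d : Fin K → Fin N, sch.len d : ℕ) : ℝ) := hc
        _ = permR * (∑ d : Fin K → Fin N, ((sch.len d : ℕ) : ℝ)) := by
            push_cast
            ring
    calc permR * ((N : ℝ) ^ K) * (r : ℝ) * (∑ p : Pos N r b, avgC N K r (t p))
        = ∑ p : Pos N r b, permR * ((N : ℝ) ^ K * avgC N K r (t p)) * (r : ℝ) := by
          rw [Finset.mul_sum]
          apply Finset.sum_congr rfl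
          intro p _
          ring
      _ = ∑ p : Pos N r b, ((x p : ℕ) : ℝ) * (N : ℝ) :=
          (Finset.sum_congr rfl (fun p _ => (step2 p).symm))
      _ = ((∑ p : Pos N r b, x p : ℕ) : ℝ) * (N : ℝ) := by
          push_cast
          rw [Finset.sum_mul]
      _ ≤ permR * (∑ d : Fin K → Fin N, ((sch.len d : ℕ) : ℝ)) * (N : ℝ) := by
          apply mul_le_mul_of_nonneg_right hcb (le_of_lt hNR)
  have havg_le : ((N : ℝ) ^ K) * (r : ℝ) * (∑ p : Pos N r b, avgC N K r (t p))
      ≤ (∑ d : Fin K → Fin N, ((sch.len d : ℕ) : ℝ)) * (N : ℝ) := by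
    have h2 : permR * (((N : ℝ) ^ K) * (r : ℝ) * (∑ p : Pos N r b, avgC N K r (t p)))
        ≤ permR * ((∑ d : Fin K → Fin N, ((sch.len d : ℕ) : ℝ)) * (N : ℝ)) := by
      calc permR * (((N : ℝ) ^ K) * (r : ℝ) * (∑ p : Pos N r b, avgC N K r (t p)))
          = permR * ((N : ℝ) ^ K) * (r : ℝ) * (∑ p : Pos N r b, avgC N K r (t p)) := by ring
        _ ≤ (permR * ∑ d : Fin K → Fin N, ((sch.len d : ℕ) : ℝ)) * (N : ℝ) := hsum_le
        _ = permR * ((∑ d : Fin K → Fin N, ((sch.len d : ℕ) : ℝ)) * (N : ℝ)) := by ring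
    exact le_of_mul_le_mul_left h2 hperm_pos
  -- Step 4: Jensen
  set P : ℕ := N.choose r * b with hP
  have hPR : (0:ℝ) < (P : ℕ) := by
    rw [hP]
    push_cast
    positivity
  have hcardPos : (Fintype.card (Pos N r b) : ℕ) = P := by
    rw [hP]
    simp [Fintype.card_prod, Fintype.card_fin]
  set w : ℝ := ((P : ℕ) : ℝ)⁻¹ with hw
  have hw0 : 0 ≤ w := by positivity
  have hNKr : ((N : ℝ) * K) / ((K : ℝ) * r) = (N : ℝ) / r := by
    rw [div_eq_div_iff (by positivity : ((K : ℝ) * r) ≠ 0) (ne_of_gt hrR)]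
    ring
  set z : Pos N r b → ℝ := fun p => ((N : ℝ) * (t p)) / ((K : ℝ) * r) with hz
  have hzmem : ∀ p, z p ∈ Set.Icc 0 ((N : ℝ) / r) := by
    intro p
    constructor
    · positivity
    · rw [hz]
      rw [← hNKr]
      apply div_le_div_of_nonneg_right ?_ (by positivity)
      · exact mul_le_mul_of_nonneg_left (by exact_mod_cast ht_le p) (le_of_lt hNR)
  have hsumw : ∑ _p : Pos N r b, w = 1 := by
    rw [Finset.sum_const, Finset.card_univ, hcardPos, nsmul_eq_mul, hw]
    field_simp
  have hJ := hg.map_sum_le (t := (univ : Finset (Pos N r b))) (w := fun _ => w)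
    (p := z) (fun _ _ => hw0) hsumw (fun p _ => hzmem p)
  -- the barycenter is at most M
  set xbar : ℝ := ∑ p : Pos N r b, w • z p with hxbar
  have hxbar_eq : xbar = (∑ p : Pos N r b, ((t p : ℕ) : ℝ)) * (w * (N : ℝ) / ((K : ℝ) * r)) := by
    rw [hxbar, Finset.sum_mul]
    apply Finset.sum_congr rfl
    intro p _
    rw [smul_eq_mul, hz]
    ring
  have hcache_sum : (∑ p : Pos N r b, ((t p : ℕ) : ℝ))
      ≤ (K : ℝ) * (M * ((b * Nat.choose (N - 1) (r - 1) : ℕ) : ℝ)) := by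
    have hdc : ((∑ p : Pos N r b, t p : ℕ) : ℝ)
        = ((∑ k : Fin K, (sch.cache k).card : ℕ) : ℝ) := by
      exact_mod_cast congrArg (Nat.cast : ℕ → ℝ) (cache_double_count sch)
    calc (∑ p : Pos N r b, ((t p : ℕ) : ℝ))
        = ((∑ p : Pos N r b, t p : ℕ) : ℝ) := by push_cast; rfl
      _ = ((∑ k : Fin K, (sch.cache k).card : ℕ) : ℝ) := hdc
      _ = ∑ k : Fin K, (((sch.cache k).card : ℕ) : ℝ) := by push_cast; rfl
      _ ≤ ∑ _k : Fin K, M * ((b * Nat.choose (N - 1) (r - 1) : ℕ) : ℝ) :=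
          Finset.sum_le_sum (fun k _ => sch.cache_size k)
      _ = (K : ℝ) * (M * ((b * Nat.choose (N - 1) (r - 1) : ℕ) : ℝ)) := by
          rw [Finset.sum_const, Finset.card_univ, Fintype.card_fin, nsmul_eq_mul]
  have hNBrP : (N : ℝ) * ((b * Nat.choose (N - 1) (r - 1) : ℕ) : ℝ)
      = (r : ℝ) * ((P : ℕ) : ℝ) := by
    rw [hP]
    push_cast
    calc (N:ℝ) * ((b:ℝ) * (((N-1).choose (r-1) : ℕ):ℝ))
        = (b:ℝ) * ((N:ℝ) * (((N-1).choose (r-1) : ℕ):ℝ)) := by ring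
      _ = (b:ℝ) * ((r:ℝ) * ((N.choose r : ℕ):ℝ)) := by rw [hND]
      _ = (r:ℝ) * (((N.choose r : ℕ):ℝ) * (b:ℝ)) := by ring
  have hxbar_le : xbar ≤ M := by
    rw [hxbar_eq]
    have hwpos : 0 ≤ w * (N : ℝ) / ((K : ℝ) * r) := by positivity
    calc (∑ p : Pos N r b, ((t p : ℕ) : ℝ)) * (w * (N : ℝ) / ((K : ℝ) * r))
        ≤ ((K : ℝ) * (M * ((b * Nat.choose (N - 1) (r - 1) : ℕ) : ℝ)))
            * (w * (N : ℝ) / ((K : ℝ) * r)) := mul_le_mul_of_nonneg_right hcache_sum hwpos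
      _ = M * (((N : ℝ) * ((b * Nat.choose (N - 1) (r - 1) : ℕ) : ℝ)) * w) / (r : ℝ) := by
          field_simp
      _ = M := by
          rw [hNBrP, hw]
          field_simp
  have hxbar0 : 0 ≤ xbar := by
    rw [hxbar]
    apply Finset.sum_nonneg
    intro p _
    rw [smul_eq_mul]
    exact mul_nonneg hw0 (hzmem p).1
  -- final chain
  set R : ℝ := (∑ dem : Fin K → Fin N, ((sch.len dem : ℕ) : ℝ)) /
      (((N : ℝ) ^ K) * ((b * Nat.choose (N - 1) (r - 1) : ℕ) : ℝ)) with hR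
  have hR0 : 0 ≤ R := by
    rw [hR]
    apply div_nonneg
    · exact Finset.sum_nonneg (fun _ _ => Nat.cast_nonneg _)
    · positivity
  have hgxbar : g xbar ≤ R := by
    calc g xbar ≤ ∑ p : Pos N r b, w * g (z p) := by
          simpa [smul_eq_mul] using hJ
      _ ≤ ∑ p : Pos N r b, w * avgC N K r (t p) := by
          apply Finset.sum_le_sum
          intro p _
          exact mul_le_mul_of_nonneg_left (hgpts (t p) (ht_le p)) hw0
      _ = w * ∑ p : Pos N r b, avgC N K r (t p) := by rw [Finset.mul_sum]
      _ ≤ R := by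
          rw [hR]
          rw [div_eq_mul_inv, ← mul_le_mul_iff_of_pos_right (by positivity :
            (0:ℝ) < ((N : ℝ) ^ K) * ((b * Nat.choose (N - 1) (r - 1) : ℕ) : ℝ) * (r : ℝ))]
          have hrw : w * (∑ p : Pos N r b, avgC N K r (t p))
              * (((N : ℝ) ^ K) * ((b * Nat.choose (N - 1) (r - 1) : ℕ) : ℝ) * (r : ℝ))
              = (((N : ℝ) ^ K) * (r : ℝ) * (∑ p : Pos N r b, avgC N K r (t p)))
                * (((b * Nat.choose (N - 1) (r - 1) : ℕ) : ℝ) * w) := by ring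
          rw [hrw]
          have hBw : ((b * Nat.choose (N - 1) (r - 1) : ℕ) : ℝ) * w * (N : ℝ) = (r : ℝ) := by
            rw [hw]
            have : ((b * Nat.choose (N - 1) (r - 1) : ℕ) : ℝ) * ((P : ℕ) : ℝ)⁻¹ * (N : ℝ)
                = ((N : ℝ) * ((b * Nat.choose (N - 1) (r - 1) : ℕ) : ℝ)) * ((P : ℕ) : ℝ)⁻¹ := by
              ring
            rw [this, hNBrP]
            field_simp
          calc (((N : ℝ) ^ K) * (r : ℝ) * (∑ p : Pos N r b, avgC N K r (t p)))
                * (((b * Nat.choose (N - 1) (r - 1) : ℕ) : ℝ) * w)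
              ≤ ((∑ d : Fin K → Fin N, ((sch.len d : ℕ) : ℝ)) * (N : ℝ))
                * (((b * Nat.choose (N - 1) (r - 1) : ℕ) : ℝ) * w) := by
                apply mul_le_mul_of_nonneg_right havg_le
                positivity
            _ = (∑ d : Fin K → Fin N, ((sch.len d : ℕ) : ℝ))
                * (((b * Nat.choose (N - 1) (r - 1) : ℕ) : ℝ) * w * (N : ℝ)) := by ring
            _ = (∑ d : Fin K → Fin N, ((sch.len d : ℕ) : ℝ)) * (r : ℝ) := by rw [hBw]
            _ = (∑ dem : Fin K → Fin N, ((sch.len dem : ℕ) : ℝ))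
                * (((N : ℝ) ^ K) * ((b * Nat.choose (N - 1) (r - 1) : ℕ) : ℝ))⁻¹
                * (((N : ℝ) ^ K) * ((b * Nat.choose (N - 1) (r - 1) : ℕ) : ℝ) * (r : ℝ)) := by
                field_simp
  have hgNr : g ((N : ℝ) / r) ≤ 0 := by
    have h1 := hgpts K le_rfl
    rw [hNKr, avgC_K_zero] at h1
    exact h1
  have hmax := hg.le_max_of_mem_Icc (x := xbar) (y := (N : ℝ) / r)
    ⟨hxbar0, hxbar_le.trans hM1⟩ ⟨by positivity, le_rfl⟩ ⟨hxbar_le, hM1⟩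
  calc g M ≤ max (g xbar) (g ((N : ℝ) / r)) := hmax
    _ ≤ R := max_le hgxbar (hgNr.trans hR0)

/-- A trivial scheme: cache nothing, broadcast the whole library. -/
noncomputable def trivialScheme (N K r b : ℕ) (M : ℝ) (hM0 : 0 ≤ M) :
    UncodedCachingScheme N K r b M where
  cache _ := ∅
  cache_size k := by
    simp only [Finset.card_empty, Nat.cast_zero]
    exact mul_nonneg hM0 (Nat.cast_nonneg _)
  len _ := Fintype.card (Pos N r b)
  enc _ W := fun i => W ((Fintype.equivFin (Pos N r b)).symm i)
  dec _ _ _ X p := X ((Fintype.equivFin (Pos N r b)) p)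
  correct := by
    intro dem W k p _
    simp

end RealAssembly

theorem statement1 (N K r : ℕ) (hN : 1 ≤ N) (hK : 1 ≤ K) (hr : 1 ≤ r) (hrN : r ≤ N)
    (M : ℝ) (hM0 : 0 ≤ M) (hM1 : M ≤ (N : ℝ) / r) :
    lowerConvexEnvelope (Set.Icc 0 ((N : ℝ) / r))
      {p : ℝ × ℝ | ∃ t : ℕ, t ≤ K ∧ p = (((N : ℝ) * t) / ((K : ℝ) * r), avgC N K r t)} M
      ≤ RstarU_avg N K r M := by
  have hne : {x : ℝ | ∃ b : ℕ, 0 < b ∧ ∃ sch : UncodedCachingScheme N K r b M,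
      x = (∑ dem : Fin K → Fin N, ((sch.len dem : ℕ) : ℝ)) /
        (((N : ℝ) ^ K) * ((b * Nat.choose (N - 1) (r - 1) : ℕ) : ℝ))}.Nonempty :=
    ⟨_, 1, one_pos, trivialScheme N K r 1 M hM0, rfl⟩
  have hR0 : 0 ≤ RstarU_avg N K r M := by
    rw [RstarU_avg]
    apply le_csInf hne
    rintro x ⟨b, hb, sch, rfl⟩
    apply div_nonneg
    · exact Finset.sum_nonneg (fun _ _ => Nat.cast_nonneg _)
    · exact mul_nonneg (pow_nonneg (Nat.cast_nonneg _) _) (Nat.cast_nonneg _)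
  apply Real.sSup_le ?_ hR0
  rintro y ⟨g, hgconv, hgpts, rfl⟩
  rw [RstarU_avg]
  apply le_csInf hne
  rintro x ⟨b, hb, sch, rfl⟩
  apply scheme_bound N K r hN hK hr hrN hM0 hM1 hb sch g hgconv
  intro tt htt
  simpa using hgpts ((((N : ℝ) * tt) / ((K : ℝ) * r), avgC N K r tt)) ⟨tt, htt, rfl⟩
end

section
/- For every s ∈ {1,...,min(K,N)}, the sequence t ↦ c^s_t is convex on {0,...,K}: for every t ∈ {1,...,K−1}, 2·c^s_t ≤ c^s_{t−1} + c^s_{t+1}. -/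
/-! Since `C(K - j, t) / C(K, t) = C(K - t, j) / C(K, j)`, `c^s_t` is a nonnegative combination
of the functions `m ↦ C(m, j)` evaluated at `m = K - t`, and each of these is convex in `m`
by Pascal's rule. -/

open Finset

theorem Nat.choose_sub_mul_choose (K t j : ℕ) :
    (K - j).choose t * K.choose j = (K - t).choose j * K.choose t := by
  have hj := Nat.choose_mul (n := K) (k := t + j) (s := j) (Nat.le_add_left j t)
  have ht := Nat.choose_mul (n := K) (k := t + j) (s := t) (Nat.le_add_right t j)
  rw [Nat.add_sub_cancel] at hj
  rw [Nat.add_sub_cancel_left, Nat.choose_symm_add] at ht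
  rw [mul_comm, ← hj, ht, mul_comm]

theorem Nat.two_mul_choose_succ_le (m j : ℕ) :
    2 * (m + 1).choose j ≤ m.choose j + (m + 2).choose j := by
  cases j with
  | zero => simp
  | succ j =>
    have hm := Nat.choose_succ_succ' m j
    have hm1 : (m + 2).choose (j + 1) = (m + 1).choose j + (m + 1).choose (j + 1) :=
      Nat.choose_succ_succ' (m + 1) j
    have hmono : m.choose j ≤ (m + 1).choose j := Nat.choose_le_succ m j
    omega

noncomputable def cstProfile (N K r s m : ℕ) : ℝ :=
  (∑ j ∈ Icc 1 (min (N - r + 1) s),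
    ((N - j).choose (r - 1) : ℝ) * ((m.choose j : ℝ) / K.choose j)) /
  ((N - 1).choose (r - 1) : ℝ)

theorem cst_eq_cstProfile {N K r s t : ℕ} (hs : s ≤ K) (ht : t ≤ K) :
    cst N K r s t = cstProfile N K r s (K - t) := by
  have hKt : (K.choose t : ℝ) ≠ 0 := by exact_mod_cast (Nat.choose_pos ht).ne'
  -- the terms with `K - t < j` vanish on both sides
  have hsum : ∑ j ∈ Icc 1 (min (N - r + 1) (min (K - t) s)),
      (((N - j).choose (r - 1) * (K - j).choose t : ℕ) : ℝ) =
      ∑ j ∈ Icc 1 (min (N - r + 1) s),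
      (((N - j).choose (r - 1) * (K - j).choose t : ℕ) : ℝ) :=
    sum_subset (Icc_subset_Icc_right (by omega)) fun j hj hj' => by
      simp only [mem_Icc] at hj hj'
      simp [Nat.choose_eq_zero_of_lt (show K - j < t by omega)]
  unfold cst cstProfile
  rw [hsum, mul_comm, ← div_div, sum_div]
  congr 1
  refine sum_congr rfl fun j hj => ?_
  have hKj : (K.choose j : ℝ) ≠ 0 := by
    simp only [mem_Icc] at hj
    exact_mod_cast (Nat.choose_pos (by omega : j ≤ K)).ne'
  have key : ((K - j).choose t : ℝ) * K.choose j = (K - t).choose j * K.choose t := by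
    exact_mod_cast Nat.choose_sub_mul_choose K t j
  field_simp
  push_cast
  rw [mul_assoc, key]
  ring

theorem two_mul_cstProfile_succ_le (N K r s m : ℕ) :
    2 * cstProfile N K r s (m + 1) ≤ cstProfile N K r s m + cstProfile N K r s (m + 2) := by
  unfold cstProfile
  rw [mul_div_assoc', ← add_div, mul_sum, ← sum_add_distrib]
  gcongr with j
  have hconv : (2 : ℝ) * (m + 1).choose j ≤ m.choose j + (m + 2).choose j := by
    exact_mod_cast Nat.two_mul_choose_succ_le m j
  rw [← mul_add, mul_left_comm, ← add_div, ← mul_div_assoc]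
  gcongr

theorem statement15_general (N K r s : ℕ) (hs2 : s ≤ min K N) :
    ∀ t : ℕ, 1 ≤ t → t ≤ K - 1 →
      2 * cst N K r s t ≤ cst N K r s (t - 1) + cst N K r s (t + 1) := by
  intro t ht1 ht2
  have hs : s ≤ K := hs2.trans (min_le_left _ _)
  rw [cst_eq_cstProfile hs (by omega), cst_eq_cstProfile hs (by omega),
    cst_eq_cstProfile hs (by omega)]
  obtain ⟨m, hm⟩ : ∃ m, K - (t + 1) = m := ⟨_, rfl⟩
  rw [show K - t = m + 1 by omega, show K - (t - 1) = m + 2 by omega, hm,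
    add_comm (cstProfile _ _ _ _ _)]
  exact two_mul_cstProfile_succ_le N K r s m

theorem statement15 (N K r s : ℕ) (hN : 1 ≤ N) (hK : 1 ≤ K) (hr : 1 ≤ r) (hrN : r ≤ N)
    (hs1 : 1 ≤ s) (hs2 : s ≤ min K N) :
    ∀ t : ℕ, 1 ≤ t → t ≤ K - 1 →
      2 * cst N K r s t ≤ cst N K r s (t - 1) + cst N K r s (t + 1) :=
  statement15_general N K r s hs2
end
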